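/- Let a : ℝ → ℝ be continuous, 1-periodic, strictly positive, and not constant, and let δ ≠ 0 be real. Define C₂ = ⟨a⁻¹·[[[[a]]]]⟩, C₉ = ⟨a·[[a⁻¹·[[a]]]]⟩, C₁₁ = ⟨a⁻¹·[[a·[[a⁻¹]]]]⟩, α₅ᵦ = δ²(−C₉/(⟨a⁻¹⟩⟨a⟩²) + C₂/(⟨a⁻¹⟩⟨a⟩)), and β₁₁ᵦ = δ²(−C₁₁/(⟨a⁻¹⟩²⟨a⟩) + C₂/(⟨a⁻¹⟩⟨a⟩)). If C₂ ≥ 0, then α₅ᵦ > 0 and β₁₁ᵦ > 0. -/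

import Mathlib

open MeasureTheory Matrix

/-- The mean of a function over one period: `⟨b⟩ = ∫₀¹ b(y) dy`. -/
noncomputable def pmean (b : ℝ → ℝ) : ℝ := ∫ y in (0:ℝ)..1, b y

/-- The fluctuating (mean-zero) part: `{b} = b − ⟨b⟩`. -/
noncomputable def pfluct (b : ℝ → ℝ) : ℝ → ℝ := fun y => b y - pmean b

/-- The mean-zero primitive of the fluctuating part:
`[[b]](y) = ∫₀^y {b}(ξ) dξ − ∫₀¹ (∫₀^s {b}(ξ) dξ) ds`. -/
noncomputable def pbracket (b : ℝ → ℝ) : ℝ → ℝ :=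
  fun y => (∫ ξ in (0:ℝ)..y, pfluct b ξ) - ∫ s in (0:ℝ)..1, (∫ ξ in (0:ℝ)..s, pfluct b ξ)

/-! The primitive `[[f]]` has derivative `{f}` and vanishes on average, so `⟨f·[[g]]⟩ = −⟨[[f]]·g⟩`
(integration by parts with no boundary term, as `[[f]](1) = [[f]](0)`). Hence
`C₉ = −⟨a⁻¹·[[a]]²⟩` and `C₁₁ = −⟨a·[[a⁻¹]]²⟩`. Both are strictly negative: `[[a]]` is 1-periodic,
so if it vanished on `[0, 1]` it would vanish identically and `a = ⟨a⟩` would be constant.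
With `⟨a⟩, ⟨a⁻¹⟩ > 0` and `C₂ ≥ 0`, both coefficients are then a positive term plus a nonnegative
one. -/

open Function Set

section Bracket

variable {f g : ℝ → ℝ}

theorem pmean_pos (hf : Continuous f) (hpos : ∀ y, 0 < f y) : 0 < pmean f :=
  intervalIntegral.intervalIntegral_pos_of_pos (hf.intervalIntegrable 0 1) hpos one_pos

theorem integral_pfluct (hf : IntervalIntegrable f volume 0 1) :
    ∫ y in (0:ℝ)..1, pfluct f y = 0 := by
  simp only [pfluct]
  rw [intervalIntegral.integral_sub hf intervalIntegrable_const]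
  simp [pmean]

theorem continuous_pfluct (hf : Continuous f) : Continuous (pfluct f) :=
  hf.sub continuous_const

theorem hasDerivAt_pbracket (hf : Continuous f) (y : ℝ) :
    HasDerivAt (pbracket f) (pfluct f y) y :=
  ((continuous_pfluct hf).integral_hasStrictDerivAt 0 y).hasDerivAt.sub_const _

theorem continuous_pbracket (hf : Continuous f) : Continuous (pbracket f) :=
  continuous_iff_continuousAt.2 fun y => (hasDerivAt_pbracket hf y).continuousAt

theorem pbracket_sub_pbracket (hf : Continuous f) (x y : ℝ) :
    pbracket f y - pbracket f x = ∫ ξ in x..y, pfluct f ξ := by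
  simp only [pbracket, sub_sub_sub_cancel_right]
  exact intervalIntegral.integral_interval_sub_left
    ((continuous_pfluct hf).intervalIntegrable _ _) ((continuous_pfluct hf).intervalIntegrable _ _)

theorem pbracket_one (hf : Continuous f) : pbracket f 1 = pbracket f 0 :=
  sub_eq_zero.1 <|
    (pbracket_sub_pbracket hf 0 1).trans (integral_pfluct (hf.intervalIntegrable 0 1))

theorem pbracket_periodic (hf : Continuous f) (hper : Periodic f 1) : Periodic (pbracket f) 1 := by
  intro y
  have hfluct : Periodic (pfluct f) 1 := fun x => by simp only [pfluct, hper x]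
  refine sub_eq_zero.1 ((pbracket_sub_pbracket hf y (y + 1)).trans ?_)
  rw [hfluct.intervalIntegral_add_eq y 0, zero_add]
  exact integral_pfluct (hf.intervalIntegrable 0 1)

theorem integral_pbracket (hf : Continuous f) : ∫ y in (0:ℝ)..1, pbracket f y = 0 := by
  have hprim : Continuous fun y => ∫ ξ in (0:ℝ)..y, pfluct f ξ :=
    intervalIntegral.continuous_primitive
      (fun _ _ => (continuous_pfluct hf).intervalIntegrable _ _) 0
  simp only [pbracket]
  rw [intervalIntegral.integral_sub (hprim.intervalIntegrable _ _) intervalIntegrable_const]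
  simp

theorem pmean_pfluct_mul_pbracket (hf : Continuous f) (hg : Continuous g) :
    pmean (fun y => pfluct f y * pbracket g y) = pmean (fun y => f y * pbracket g y) := by
  have hG := continuous_pbracket hg
  simp only [pmean, pfluct, sub_mul]
  rw [intervalIntegral.integral_sub (f := fun y => f y * pbracket g y)
    (g := fun y => (∫ x in (0:ℝ)..1, f x) * pbracket g y) ((hf.mul hG).intervalIntegrable _ _)
    ((continuous_const.mul hG).intervalIntegrable _ _), intervalIntegral.integral_const_mul,
    integral_pbracket hg, mul_zero, sub_zero]

theorem pmean_mul_pbracket (hf : Continuous f) (hg : Continuous g) :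
    pmean (fun y => f y * pbracket g y) = -pmean (fun y => pbracket f y * g y) := by
  have hF := continuous_pbracket hf
  have hG := continuous_pbracket hg
  have hparts : ∫ y in (0:ℝ)..1, (pfluct f y * pbracket g y + pbracket f y * pfluct g y) = 0 := by
    rw [intervalIntegral.integral_deriv_mul_eq_sub (fun x _ => hasDerivAt_pbracket hf x)
      (fun x _ => hasDerivAt_pbracket hg x) ((continuous_pfluct hf).intervalIntegrable _ _)
      ((continuous_pfluct hg).intervalIntegrable _ _), pbracket_one hf, pbracket_one hg, sub_self]
  rw [intervalIntegral.integral_add (f := fun y => pfluct f y * pbracket g y)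
    (g := fun y => pbracket f y * pfluct g y)
    (((continuous_pfluct hf).mul hG).intervalIntegrable _ _)
    ((hF.mul (continuous_pfluct hg)).intervalIntegrable _ _)] at hparts
  have hswap := pmean_pfluct_mul_pbracket hg hf
  simp only [pmean, mul_comm (pfluct g _), mul_comm (g _)] at hswap
  rw [← pmean_pfluct_mul_pbracket hf hg, pmean, pmean, ← hswap]
  linarith

theorem exists_pbracket_ne_zero (hf : Continuous f) (hper : Periodic f 1)
    (hnc : ∃ x y, f x ≠ f y) : ∃ x ∈ Icc (0:ℝ) 1, pbracket f x ≠ 0 := by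
  by_contra! hzero
  have hF : pbracket f = 0 := funext fun x => by
    obtain ⟨y, hy, hxy⟩ := (pbracket_periodic hf hper).exists_mem_Ico₀ one_pos x
    exact hxy.trans (hzero y (Ico_subset_Icc_self hy))
  have hconst : ∀ y, f y = pmean f := fun y => by
    have hderiv := hasDerivAt_pbracket hf y
    rw [hF] at hderiv
    exact sub_eq_zero.1 ((hasDerivAt_const y 0).unique hderiv).symm
  obtain ⟨x, y, hxy⟩ := hnc
  exact hxy ((hconst x).trans (hconst y).symm)

theorem pmean_mul_sq_pos {w : ℝ → ℝ} (hw : Continuous w) (hwpos : ∀ y, 0 < w y)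
    (hg : Continuous g) (hne : ∃ x ∈ Icc (0:ℝ) 1, g x ≠ 0) :
    0 < pmean (fun y => w y * g y ^ 2) := by
  obtain ⟨x, hx, hgx⟩ := hne
  have h := intervalIntegral.integral_lt_integral_of_continuousOn_of_le_of_exists_lt one_pos
    continuousOn_const (hw.mul (hg.pow 2)).continuousOn
    (fun y _ => mul_nonneg (hwpos y).le (sq_nonneg (g y)))
    ⟨x, hx, mul_pos (hwpos x) (sq_pos_of_ne_zero hgx)⟩
  simpa [pmean] using h

theorem pmean_mul_pbracket_mul_pbracket_neg {w : ℝ → ℝ} (hf : Continuous f) (hper : Periodic f 1)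
    (hnc : ∃ x y, f x ≠ f y) (hw : Continuous w) (hwpos : ∀ y, 0 < w y) :
    pmean (fun y => f y * pbracket (fun z => w z * pbracket f z) y) < 0 := by
  rw [pmean_mul_pbracket (g := fun z => w z * pbracket f z) hf (hw.mul (continuous_pbracket hf)),
    neg_lt_zero]
  convert pmean_mul_sq_pos hw hwpos (continuous_pbracket hf) (exists_pbracket_ne_zero hf hper hnc)
    using 3
  ring

end Bracket

theorem statement16_general (a : ℝ → ℝ) (ha : Continuous a) (hper : Function.Periodic a 1)
    (hpos : ∀ y, 0 < a y) (hnc : ∃ x y, a x ≠ a y) (δ : ℝ) (hδ : δ ≠ 0)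
    (C₂ C₉ C₁₁ α₅b β₁₁b : ℝ)
    (hC9 : C₉ = pmean (fun y => a y * pbracket (fun z => (a z)⁻¹ * pbracket a z) y))
    (hC11 : C₁₁ = pmean (fun y => (a y)⁻¹
        * pbracket (fun z => a z * pbracket (fun w => (a w)⁻¹) z) y))
    (hα : α₅b = δ^2 * (-C₉ / (pmean (fun y => (a y)⁻¹) * (pmean a)^2)
        + C₂ / (pmean (fun y => (a y)⁻¹) * pmean a)))
    (hβ : β₁₁b = δ^2 * (-C₁₁ / ((pmean (fun y => (a y)⁻¹))^2 * pmean a)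
        + C₂ / (pmean (fun y => (a y)⁻¹) * pmean a)))
    (hC2nn : 0 ≤ C₂) :
    0 < α₅b ∧ 0 < β₁₁b := by
  have hainv : Continuous fun y => (a y)⁻¹ := ha.inv₀ fun y => (hpos y).ne'
  have hainvpos : ∀ y, 0 < (a y)⁻¹ := fun y => inv_pos.2 (hpos y)
  have hC9neg : C₉ < 0 :=
    hC9 ▸ pmean_mul_pbracket_mul_pbracket_neg ha hper hnc hainv hainvpos
  have hC11neg : C₁₁ < 0 := by
    obtain ⟨x, y, hxy⟩ := hnc
    exact hC11 ▸ pmean_mul_pbracket_mul_pbracket_neg hainv (fun y => by simp only [hper y])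
      ⟨x, y, fun h => hxy (inv_injective h)⟩ ha hpos
  have hma : 0 < pmean a := pmean_pos ha hpos
  have hmainv : 0 < pmean fun y => (a y)⁻¹ := pmean_pos hainv hainvpos
  have hδ2 : 0 < δ ^ 2 := by positivity
  subst hα hβ
  exact ⟨mul_pos hδ2 (add_pos_of_pos_of_nonneg (div_pos (neg_pos.2 hC9neg) (by positivity))
      (by positivity)),
    mul_pos hδ2 (add_pos_of_pos_of_nonneg (div_pos (neg_pos.2 hC11neg) (by positivity))
      (by positivity))⟩

/-- For `a` continuous, 1-periodic, strictly positive and non-constant, and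
`δ ≠ 0`, if `C₂ = ⟨a⁻¹·[[[[a]]]]⟩ ≥ 0` then the BBM-type dispersion coefficients
`α₅ᵦ = δ²(−C₉/(⟨a⁻¹⟩⟨a⟩²) + C₂/(⟨a⁻¹⟩⟨a⟩))` and
`β₁₁ᵦ = δ²(−C₁₁/(⟨a⁻¹⟩²⟨a⟩) + C₂/(⟨a⁻¹⟩⟨a⟩))` are strictly positive. -/
theorem statement16 (a : ℝ → ℝ) (ha : Continuous a) (hper : Function.Periodic a 1)
    (hpos : ∀ y, 0 < a y) (hnc : ∃ x y, a x ≠ a y) (δ : ℝ) (hδ : δ ≠ 0)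
    (C₂ C₉ C₁₁ α₅b β₁₁b : ℝ)
    (hC2 : C₂ = pmean (fun y => (a y)⁻¹ * pbracket (pbracket a) y))
    (hC9 : C₉ = pmean (fun y => a y * pbracket (fun z => (a z)⁻¹ * pbracket a z) y))
    (hC11 : C₁₁ = pmean (fun y => (a y)⁻¹
        * pbracket (fun z => a z * pbracket (fun w => (a w)⁻¹) z) y))
    (hα : α₅b = δ^2 * (-C₉ / (pmean (fun y => (a y)⁻¹) * (pmean a)^2)
        + C₂ / (pmean (fun y => (a y)⁻¹) * pmean a)))
    (hβ : β₁₁b = δ^2 * (-C₁₁ / ((pmean (fun y => (a y)⁻¹))^2 * pmean a)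
        + C₂ / (pmean (fun y => (a y)⁻¹) * pmean a)))
    (hC2nn : 0 ≤ C₂) :
    0 < α₅b ∧ 0 < β₁₁b :=
  statement16_general a ha hper hpos hnc δ hδ C₂ C₉ C₁₁ α₅b β₁₁b hC9 hC11 hα hβ hC2nn
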